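/- Let n ≥ 1 and let φ : ℂⁿ → ℝ be a smooth function. Then for every k ∈ {1,…,n} the Wirtinger derivative ∂φ/∂z̄_k is holomorphic on ℂⁿ if and only if there exist a Hermitian n×n matrix (c_{jk}), complex constants α_1,…,α_n, and a real constant γ such that φ(z) = Σ_{j,k=1}^n c_{jk} z_j z̄_k + Re(Σ_{k=1}^n α_k z_k) + γ for all z ∈ ℂⁿ. (Geometrically: the conformally flat Hermitian metric g_{j k̄} = φ^{-1} δ_{jk} on the open set {φ > 0} has holomorphic torsion exactly for these φ.) -/

import Mathlib

/-!
If every `∂φ/∂z̄ₖ` is entire, then so is every entry `∂²φ/∂zⱼ∂z̄ₖ` of the complex Hessian, being a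
directional derivative of an entire function. Since `φ` is real and its real Hessian is
symmetric, the conjugate of `∂²φ/∂zⱼ∂z̄ₖ` is `∂²φ/∂zₖ∂z̄ⱼ`, again entire; an entire function with
entire conjugate is constant. So the complex Hessian is a constant Hermitian matrix `c` and each
`∂φ/∂z̄ₖ` is affine and holomorphic. Subtracting from `φ` the real polynomial
`Σ cⱼₖ zⱼ z̄ₖ + Re Σ αₖ zₖ + φ(0)` with the same `∂̄`-derivatives leaves a real function annihilated
by `∂̄`, i.e. a real-valued entire function, hence a constant, namely `0`. Conversely the
`∂̄`-derivatives of such a polynomial are affine holomorphic functions.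
-/

open Complex MeasureTheory Finset

noncomputable section

/-- The Wirtinger derivative `∂f/∂z̄ₖ` of a (real-differentiable) function
`f : ℂⁿ → ℂ`, namely `½(∂f/∂xₖ + i ∂f/∂yₖ)`. -/
def wirtZBar {n : ℕ} (f : (Fin n → ℂ) → ℂ) (k : Fin n) (z : Fin n → ℂ) : ℂ :=
  (1 / 2 : ℂ) *
    (fderiv ℝ f z (Pi.single k 1) + Complex.I * fderiv ℝ f z (Pi.single k Complex.I))

/-- The Wirtinger derivative `∂ψ/∂z̄ₖ` of a real-valued function. -/
def wirtZBarR {n : ℕ} (ψ : (Fin n → ℂ) → ℝ) (k : Fin n) (z : Fin n → ℂ) : ℂ :=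
  wirtZBar (fun w => (ψ w : ℂ)) k z

open scoped ComplexConjugate

section ComplexDifferentiability

variable {E F : Type*} [NormedAddCommGroup E] [NormedSpace ℂ E] [NormedAddCommGroup F]
  [NormedSpace ℂ F]

theorem DifferentiableAt.fderiv_real_I_smul {f : E → F} {z : E} (hf : DifferentiableAt ℂ f z)
    (v : E) : fderiv ℝ f z (I • v) = I • fderiv ℝ f z v := by
  rw [(hf.hasFDerivAt.restrictScalars ℝ).fderiv, ContinuousLinearMap.coe_restrictScalars',
    ContinuousLinearMap.map_smul]

theorem differentiableAt_complex_of_fderiv_real_I_smul {f : E → F} {z : E}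
    (hf : DifferentiableAt ℝ f z) (hI : ∀ v, fderiv ℝ f z (I • v) = I • fderiv ℝ f z v) :
    DifferentiableAt ℂ f z := by
  set L := fderiv ℝ f z
  have hsmul (c : ℂ) (v : E) : L (c • v) = c • L v := by
    have hc : c • v = c.re • v + c.im • I • v := by
      rw [← Complex.coe_smul, ← Complex.coe_smul, smul_smul, ← add_smul, re_add_im]
    rw [hc, map_add, map_smul, map_smul, hI, ← Complex.coe_smul, ← Complex.coe_smul, smul_smul,
      ← add_smul, re_add_im]
  exact (differentiableAt_iff_restrictScalars ℝ hf).2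
    ⟨{ toFun := L, map_add' := L.map_add, map_smul' := hsmul, cont := L.cont }, rfl⟩

theorem Differentiable.differentiable_fderiv_real_apply {g : E → F} (hg : Differentiable ℂ g)
    (hg2 : ContDiff ℝ 2 g) (v : E) : Differentiable ℂ fun z => fderiv ℝ g z v := by
  intro z
  have hD : Differentiable ℝ (fderiv ℝ g) :=
    (hg2.fderiv_right (m := 1) (by norm_num)).differentiable one_ne_zero
  have hdir (w u : E) :
      fderiv ℝ (fun y => fderiv ℝ g y w) z u = fderiv ℝ (fderiv ℝ g) z u w := by
    rw [fderiv_clm_apply (hD z) (differentiableAt_const w)]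
    simp
  have hsymm := (hg2.contDiffAt (x := z)).isSymmSndFDerivAt (by simp)
  refine differentiableAt_complex_of_fderiv_real_I_smul
    ((hD z).clm_apply (differentiableAt_const v)) fun w => ?_
  have hCR : (fun y => fderiv ℝ g y (I • w)) = fun y => I • fderiv ℝ g y w :=
    funext fun y => (hg y).fderiv_real_I_smul w
  calc fderiv ℝ (fun y => fderiv ℝ g y v) z (I • w)
      = fderiv ℝ (fun y => fderiv ℝ g y (I • w)) z v := by rw [hdir, hdir]; exact hsymm _ _
    _ = I • fderiv ℝ (fun y => fderiv ℝ g y w) z v := by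
      rw [hCR, fderiv_fun_const_smul ((hD z).clm_apply (differentiableAt_const w))]
      rfl
    _ = I • fderiv ℝ (fun y => fderiv ℝ g y v) z w := by rw [hdir, hdir, hsymm]

theorem Differentiable.apply_eq_of_differentiable_conj {f : E → ℂ} (hf : Differentiable ℂ f)
    (hcf : Differentiable ℂ fun z => conj (f z)) (x y : E) : f x = f y := by
  refine is_const_of_fderiv_eq_zero (𝕜 := ℝ) (fun z => (hf z).restrictScalars ℝ) (fun z => ?_) x y
  ext v
  have hconj (u : E) : fderiv ℝ (fun z => conj (f z)) z u = conj (fderiv ℝ f z u) := by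
    change fderiv ℝ (fun z => star (f z)) z u = _
    rw [(((hf z).restrictScalars ℝ).hasFDerivAt.star).fderiv]
    rfl
  -- `conj ∘ f` is both complex linear and antilinear to first order
  have h := (hcf z).fderiv_real_I_smul v
  rw [hconj, hconj, (hf z).fderiv_real_I_smul, smul_eq_mul, smul_eq_mul, map_mul, conj_I] at h
  have : conj (fderiv ℝ f z v) = 0 := by
    linear_combination (I / 2) * h + conj (fderiv ℝ f z v) * I_mul_I
  simpa using this

end ComplexDifferentiability

theorem Pi.single_eq_smul_single_one {ι R : Type*} [DecidableEq ι] [Semiring R] (i : ι) (x : R) :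
    (Pi.single i x : ι → R) = x • Pi.single i 1 := by
  rw [← Pi.single_smul', smul_eq_mul, mul_one]

section Wirtinger

variable {n : ℕ}

theorem ContinuousLinearMap.map_I_smul_of_single {F : Type*} [NormedAddCommGroup F]
    [NormedSpace ℂ F] (L : (Fin n → ℂ) →L[ℝ] F)
    (h : ∀ k, L (Pi.single k I) = I • L (Pi.single k 1)) (v : Fin n → ℂ) :
    L (I • v) = I • L v := by
  have hk (k : Fin n) (x : ℂ) : L (Pi.single k (I • x)) = I • L (Pi.single k x) :=
    real_linearMap_map_smul_complex
      (ℓ := (L : (Fin n → ℂ) →ₗ[ℝ] F).comp (LinearMap.single ℝ (fun _ => ℂ) k)) (h k) I x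
  conv_lhs => rw [← Finset.univ_sum_single (I • v)]
  conv_rhs => rw [← Finset.univ_sum_single v]
  simp only [map_sum, Finset.smul_sum, Pi.smul_apply, hk]

variable {f g : (Fin n → ℂ) → ℂ} {z : Fin n → ℂ} {k : Fin n}

theorem differentiableAt_iff_wirtZBar_eq_zero (hf : DifferentiableAt ℝ f z) :
    DifferentiableAt ℂ f z ↔ ∀ k, wirtZBar f k z = 0 := by
  constructor
  · intro hc k
    rw [wirtZBar, Pi.single_eq_smul_single_one k I, hc.fderiv_real_I_smul, smul_eq_mul]
    linear_combination (1 / 2 * fderiv ℝ f z (Pi.single k 1)) * I_mul_I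
  · intro h
    refine differentiableAt_complex_of_fderiv_real_I_smul hf
      ((fderiv ℝ f z).map_I_smul_of_single fun k => ?_)
    have hk := h k
    rw [wirtZBar] at hk
    rw [smul_eq_mul]
    linear_combination (-2 * I) * hk + fderiv ℝ f z (Pi.single k I) * I_mul_I

theorem apply_eq_of_wirtZBar_eq_zero (hf : Differentiable ℝ f) (hreal : ∀ z, conj (f z) = f z)
    (h : ∀ k z, wirtZBar f k z = 0) (z w : Fin n → ℂ) : f z = f w := by
  have hhol : Differentiable ℂ f := fun z =>
    (differentiableAt_iff_wirtZBar_eq_zero (hf z)).2 fun k => h k z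
  exact hhol.apply_eq_of_differentiable_conj (by simpa only [hreal] using hhol) z w

theorem Differentiable.apply_eq_add_sum_of_fderiv_single (hg : Differentiable ℂ g)
    {a : Fin n → ℂ} (ha : ∀ z j, fderiv ℂ g z (Pi.single j 1) = a j) (z : Fin n → ℂ) :
    g z = g 0 + ∑ j, a j * z j := by
  have hlin : Differentiable ℂ fun w : Fin n → ℂ => ∑ j, a j * w j := by fun_prop
  have hzero (y : Fin n → ℂ) : fderiv ℂ (fun w => g w - ∑ j, a j * w j) y = 0 := by
    rw [fderiv_fun_sub (hg y) (hlin y)]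
    refine ContinuousLinearMap.coe_injective (LinearMap.pi_ext fun j x => ?_)
    have hproj (i : Fin n) : fderiv ℂ (fun w : Fin n → ℂ => w i) y = ContinuousLinearMap.proj i :=
      (hasFDerivAt_apply i y).fderiv
    simp (disch := fun_prop) [Pi.single_eq_smul_single_one j x, ha, hproj, fderiv_fun_sum,
      fderiv_const_mul, Pi.single_apply]
  have h := is_const_of_fderiv_eq_zero (hg.fun_sub hlin) hzero z 0
  simp only [Pi.zero_apply, mul_zero, Finset.sum_const_zero, sub_zero] at h
  rw [← h, sub_add_cancel]

theorem wirtZBar_add (hf : DifferentiableAt ℝ f z) (hg : DifferentiableAt ℝ g z) :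
    wirtZBar (fun w => f w + g w) k z = wirtZBar f k z + wirtZBar g k z := by
  simp only [wirtZBar, fderiv_fun_add hf hg, add_apply]
  ring

theorem wirtZBar_sub (hf : DifferentiableAt ℝ f z) (hg : DifferentiableAt ℝ g z) :
    wirtZBar (fun w => f w - g w) k z = wirtZBar f k z - wirtZBar g k z := by
  simp only [wirtZBar, fderiv_fun_sub hf hg, sub_apply]
  ring

theorem wirtZBar_sum {ι : Type*} (s : Finset ι) {f : ι → (Fin n → ℂ) → ℂ}
    (hf : ∀ i ∈ s, DifferentiableAt ℝ (f i) z) :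
    wirtZBar (fun w => ∑ i ∈ s, f i w) k z = ∑ i ∈ s, wirtZBar (f i) k z := by
  simp only [wirtZBar, fderiv_fun_sum hf, _root_.sum_apply, Finset.mul_sum,
    ← Finset.sum_add_distrib]

theorem wirtZBar_mul_conj (hf : DifferentiableAt ℂ f z) (hg : DifferentiableAt ℂ g z) :
    wirtZBar (fun w => f w * conj (g w)) k z = f z * conj (fderiv ℂ g z (Pi.single k 1)) := by
  have hD : HasFDerivAt (fun w => f w * conj (g w)) _ z :=
    (hf.hasFDerivAt.restrictScalars ℝ).fun_mul (hg.hasFDerivAt.restrictScalars ℝ).star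
  rw [wirtZBar, hD.fderiv, Pi.single_eq_smul_single_one k I]
  simp only [one_div, add_apply, smul_apply, ContinuousLinearMap.comp_apply,
    ContinuousLinearMap.coe_restrictScalars', ContinuousLinearEquiv.coe_coe, starL'_apply,
    RCLike.star_def, smul_eq_mul, map_smul, star_mul', conj_I, neg_mul, mul_neg]
  linear_combination ((conj (g z) * fderiv ℂ f z (Pi.single k 1)
    - f z * conj (fderiv ℂ g z (Pi.single k 1))) / 2) * I_sq

def quadraticPoly (c : Matrix (Fin n) (Fin n) ℂ) (α : Fin n → ℂ) (γ : ℝ) (z : Fin n → ℂ) : ℂ :=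
  (∑ j, ∑ k, c j k * z j * conj (z k)) + (((∑ k, α k * z k).re : ℝ) : ℂ) + (γ : ℂ)

variable (c : Matrix (Fin n) (Fin n) ℂ) (α : Fin n → ℂ) (γ : ℝ)

theorem quadraticPoly_eq_sum_mul_conj_add (z : Fin n → ℂ) :
    quadraticPoly c α γ z =
      ∑ l, (∑ j, c j l * z j + conj (α l) / 2) * conj (z l) + ((∑ l, α l * z l) / 2 + γ) := by
  rw [quadraticPoly, re_eq_add_conj, map_sum, Finset.sum_comm]
  simp only [map_mul, add_mul, add_div, Finset.sum_add_distrib, Finset.sum_mul, Finset.sum_div]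
  ring_nf

theorem wirtZBar_quadraticPoly (k : Fin n) (z : Fin n → ℂ) :
    wirtZBar (quadraticPoly c α γ) k z = ∑ j, c j k * z j + conj (α k) / 2 := by
  rw [funext (quadraticPoly_eq_sum_mul_conj_add c α γ),
    wirtZBar_add (by fun_prop) (by fun_prop), wirtZBar_sum _ (fun l _ => by fun_prop),
    (differentiableAt_iff_wirtZBar_eq_zero (by fun_prop)).1 (by fun_prop) k, add_zero]
  have hterm (l : Fin n) :
      wirtZBar (fun w => (∑ j, c j l * w j + conj (α l) / 2) * conj (w l)) k z
        = (∑ j, c j l * z j + conj (α l) / 2) * conj ((Pi.single k 1 : Fin n → ℂ) l) := by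
    rw [wirtZBar_mul_conj (by fun_prop) (by fun_prop), (hasFDerivAt_apply l z).fderiv]
    rfl
  simp [hterm, Pi.single_apply]

theorem conj_quadraticPoly (hc : c.IsHermitian) (z : Fin n → ℂ) :
    conj (quadraticPoly c α γ z) = quadraticPoly c α γ z := by
  rw [quadraticPoly]
  simp only [map_add, map_sum, map_mul, conj_conj, conj_ofReal]
  rw [Finset.sum_comm]
  congr 2
  refine Finset.sum_congr rfl fun j _ => Finset.sum_congr rfl fun k _ => ?_
  rw [← hc.apply, RCLike.star_def, conj_conj]
  ring

end Wirtinger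

section RealValued

variable {n : ℕ} {φ : (Fin n → ℂ) → ℝ}

theorem wirtZBarR_eq {z : Fin n → ℂ} (hφ : DifferentiableAt ℝ φ z) (k : Fin n) :
    wirtZBarR φ k z =
      (1 / 2) * ((fderiv ℝ φ z (Pi.single k 1) : ℂ) + I * (fderiv ℝ φ z (Pi.single k I) : ℂ)) := by
  have h : HasFDerivAt (fun w => (φ w : ℂ)) (ofRealCLM.comp (fderiv ℝ φ z)) z :=
    ofRealCLM.hasFDerivAt.comp z hφ.hasFDerivAt
  rw [wirtZBarR, wirtZBar, h.fderiv]
  rfl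

theorem contDiff_wirtZBarR {m : WithTop ℕ∞} (hφ : ContDiff ℝ (m + 1) φ) (k : Fin n) :
    ContDiff ℝ m (wirtZBarR φ k) := by
  have hD (v : Fin n → ℂ) : ContDiff ℝ m fun z => fderiv ℝ φ z v :=
    (hφ.fderiv_right le_rfl).clm_apply contDiff_const
  rw [funext fun z => wirtZBarR_eq ((hφ.differentiable (by simp)) z) k]
  exact contDiff_const.mul ((ofRealCLM.contDiff.comp (hD _)).add
    (contDiff_const.mul (ofRealCLM.contDiff.comp (hD _))))

theorem fderiv_wirtZBarR_apply (hφ : ContDiff ℝ 2 φ) (k : Fin n) (z w : Fin n → ℂ) :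
    fderiv ℝ (wirtZBarR φ k) z w =
      (1 / 2) * ((fderiv ℝ (fderiv ℝ φ) z w (Pi.single k 1) : ℂ)
        + I * (fderiv ℝ (fderiv ℝ φ) z w (Pi.single k I) : ℂ)) := by
  have hD : Differentiable ℝ (fderiv ℝ φ) :=
    (hφ.fderiv_right (m := 1) (by norm_num)).differentiable one_ne_zero
  have hdir (v : Fin n → ℂ) : HasFDerivAt (fun y => (fderiv ℝ φ y v : ℂ))
      (ofRealCLM.comp ((fderiv ℝ φ z).comp 0 + (fderiv ℝ (fderiv ℝ φ) z).flip v)) z :=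
    ofRealCLM.hasFDerivAt.comp z ((hD z).hasFDerivAt.clm_apply (hasFDerivAt_const v z))
  rw [funext fun z => wirtZBarR_eq ((hφ.differentiable (by norm_num)) z) k,
    (((hdir _).fun_add ((hdir _).const_mul I)).const_mul (1 / 2 : ℂ)).fderiv]
  simp only [ContinuousLinearMap.comp_zero, zero_add, smul_add, add_apply, smul_apply,
    ContinuousLinearMap.comp_apply, ContinuousLinearMap.flip_apply, ofRealCLM_apply, smul_eq_mul]
  ring

theorem conj_fderiv_wirtZBarR_apply (hφ : ContDiff ℝ 2 φ) {k : Fin n} {z : Fin n → ℂ}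
    (hk : DifferentiableAt ℂ (wirtZBarR φ k) z) (j : Fin n) :
    conj (fderiv ℝ (wirtZBarR φ k) z (Pi.single j 1)) =
      fderiv ℝ (wirtZBarR φ j) z (Pi.single k 1) := by
  have hsymm := (hφ.contDiffAt (x := z)).isSymmSndFDerivAt (by simp)
  have hCR := hk.fderiv_real_I_smul (Pi.single j 1)
  rw [← Pi.single_eq_smul_single_one j I, fderiv_wirtZBarR_apply hφ,
    fderiv_wirtZBarR_apply hφ] at hCR
  -- the real part of the Cauchy–Riemann equation for `∂φ/∂z̄ₖ` in the direction `eⱼ`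
  have hre : fderiv ℝ (fderiv ℝ φ) z (Pi.single j I) (Pi.single k 1) =
      -fderiv ℝ (fderiv ℝ φ) z (Pi.single j 1) (Pi.single k I) := by
    have h := congrArg Complex.re hCR
    norm_num at h
    linarith
  rw [fderiv_wirtZBarR_apply hφ, fderiv_wirtZBarR_apply hφ, hsymm (Pi.single k 1),
    hsymm (Pi.single k 1), hre]
  apply Complex.ext <;> simp

theorem exists_isHermitian_wirtZBarR_eq (hφ : ContDiff ℝ 3 φ)
    (hhol : ∀ k, Differentiable ℂ (wirtZBarR φ k)) :
    ∃ c : Matrix (Fin n) (Fin n) ℂ, c.IsHermitian ∧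
      ∀ k z, wirtZBarR φ k z = wirtZBarR φ k 0 + ∑ j, c j k * z j := by
  -- `H j k = ∂²φ/∂zⱼ∂z̄ₖ`
  set H : Fin n → Fin n → (Fin n → ℂ) → ℂ :=
    fun j k z => fderiv ℝ (wirtZBarR φ k) z (Pi.single j 1)
  have hH_hol (j k : Fin n) : Differentiable ℂ (H j k) :=
    (hhol k).differentiable_fderiv_real_apply (contDiff_wirtZBarR hφ k) _
  have hH_conj (j k : Fin n) (z : Fin n → ℂ) : conj (H j k z) = H k j z :=
    conj_fderiv_wirtZBarR_apply (hφ.of_le (by norm_num)) (hhol k z) j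
  have hH_const (j k : Fin n) (z : Fin n → ℂ) : H j k z = H j k 0 :=
    (hH_hol j k).apply_eq_of_differentiable_conj (by simpa only [hH_conj] using hH_hol k j) z 0
  refine ⟨Matrix.of fun j k => H j k 0, Matrix.IsHermitian.ext fun j k => hH_conj k j 0,
    fun k z => (hhol k).apply_eq_add_sum_of_fderiv_single (fun y j => ?_) z⟩
  rw [Matrix.of_apply, ← hH_const]
  exact congrArg (· (Pi.single j 1)) ((hhol k y).fderiv_restrictScalars ℝ).symm

end RealValued

theorem stmt0 (n : ℕ) (φ : (Fin n → ℂ) → ℝ)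
    (hφ : ContDiff ℝ (⊤ : ℕ∞) φ) :
    (∀ k : Fin n, Differentiable ℂ (wirtZBarR φ k)) ↔
      ∃ c : Matrix (Fin n) (Fin n) ℂ, c.IsHermitian ∧
        ∃ α : Fin n → ℂ, ∃ γ : ℝ,
          ∀ z : Fin n → ℂ,
            (φ z : ℂ) =
              (∑ j, ∑ k, c j k * z j * (starRingEnd ℂ) (z k)) +
                (((∑ k, α k * z k).re : ℝ) : ℂ) + (γ : ℂ) := by
  constructor
  · intro hhol
    obtain ⟨c, hc, hg⟩ := exists_isHermitian_wirtZBarR_eq (hφ.of_le (by norm_cast)) hhol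
    set α : Fin n → ℂ := fun k => 2 * conj (wirtZBarR φ k 0)
    set P := quadraticPoly c α (φ 0)
    refine ⟨c, hc, α, φ 0, fun z => sub_eq_zero.1 ?_⟩
    have hΦ : Differentiable ℝ fun w => (φ w : ℂ) :=
      ofRealCLM.differentiable.comp (hφ.differentiable (by simp))
    have hP : Differentiable ℝ P := by unfold P quadraticPoly; fun_prop
    have hwirt (k : Fin n) (w : Fin n → ℂ) : wirtZBar (fun w => (φ w : ℂ) - P w) k w = 0 := by
      rw [wirtZBar_sub (hΦ w) (hP w), wirtZBar_quadraticPoly, ← wirtZBarR, hg]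
      simp only [α, map_mul, conj_conj, map_ofNat]
      ring
    have hreal (w : Fin n → ℂ) : conj ((φ w : ℂ) - P w) = (φ w : ℂ) - P w := by
      rw [map_sub, conj_ofReal, conj_quadraticPoly c α _ hc]
    calc (φ z : ℂ) - P z = (φ 0 : ℂ) - P 0 :=
          apply_eq_of_wirtZBar_eq_zero (hΦ.fun_sub hP) hreal hwirt z 0
      _ = 0 := by simp [P, quadraticPoly]
  · rintro ⟨c, -, α, γ, hφP⟩ k
    have hwirt : wirtZBarR φ k = fun z => ∑ j, c j k * z j + conj (α k) / 2 := by
      ext z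
      rw [wirtZBarR, funext hφP]
      exact wirtZBar_quadraticPoly c α γ k z
    rw [hwirt]
    fun_prop
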